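/- Let p be an odd integer with p ≥ 5. Then the Turán number ex(p+6, B_p) equals (p+3)(p+5)/2. -/

import Mathlib

open SimpleGraph

/-- A graph contains the book `B_p` iff some edge has at least `p` common neighbors. -/
def SimpleGraph.ContainsBook {V : Type*} (G : SimpleGraph V) (p : ℕ) : Prop :=
  ∃ x y, G.Adj x y ∧ p ≤ (G.commonNeighbors x y).ncard

/-- The Turán number `ex(n, B_p)`: the maximum number of edges of a simple graph
on `n` vertices containing no book `B_p`. -/
noncomputable def bookTuranNumber (n p : ℕ) : ℕ :=
  sSup {e : ℕ | ∃ G : SimpleGraph (Fin n), ¬ G.ContainsBook p ∧ G.edgeSet.ncard = e}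

/-- The disjoint union of `m` copies of the complete graph `K_k`. -/
def unionComplete (m k : ℕ) : SimpleGraph (Fin m × Fin k) :=
  SimpleGraph.fromRel fun a b => a.1 = b.1

/-- The join `G ∨ H` of two graphs. -/
def SimpleGraph.join {α β : Type*} (G : SimpleGraph α) (H : SimpleGraph β) :
    SimpleGraph (α ⊕ β) := (Gᶜ ⊕g Hᶜ)ᶜ

/-- A disjoint union of cycles `C_{i 0} + ⋯ + C_{i (t-1)}`. -/
def cycleFamily (t : ℕ) (i : Fin t → ℕ) : SimpleGraph (Σ j : Fin t, Fin (i j)) :=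
  SimpleGraph.fromRel fun a b => ∃ h : a.1 = b.1, (SimpleGraph.cycleGraph (i b.1)).Adj (h ▸ a.2) b.2

/-!
Pass to the complement `H = Gᶜ` on `n = p + 6` vertices. An edge `xy` of `G` has as common
neighbours exactly the vertices outside `{x, y} ∪ N_H(x) ∪ N_H(y)`, so `G` is `B_p`-free iff the
`H`-neighbourhoods of any two non-adjacent vertices of `H` cover at least `5` vertices.
Such an `H` has degree sum at least `3(n - 1)`: if `u` has minimum degree `d ≤ 2`, every
non-neighbour of `u` has degree at least `5 - d`. Conversely `K₃` plus a cubic graph on `p + 3`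
vertices attains this bound; the cubic part is a union of `K₄`'s when `p ≡ 1 (mod 4)`, and a
Petersen graph together with `K₄`'s when `p ≡ 3 (mod 4)`.
-/

open Finset

namespace SimpleGraph

variable {V W : Type*}

def NonadjUnionAtLeast [Fintype V] [DecidableEq V] (H : SimpleGraph V) [DecidableRel H.Adj]
    (k : ℕ) : Prop :=
  ∀ ⦃x y⦄, x ≠ y → ¬H.Adj x y → k ≤ #(H.neighborFinset x ∪ H.neighborFinset y)

lemma ContainsBook.of_embedding [Finite W] {G : SimpleGraph V} {G' : SimpleGraph W}
    (f : G ↪g G') {p : ℕ} (h : G.ContainsBook p) : G'.ContainsBook p := by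
  obtain ⟨x, y, hxy, hp⟩ := h
  refine ⟨f x, f y, f.map_adj_iff.2 hxy, hp.trans ?_⟩
  rw [← Set.ncard_image_of_injective _ f.injective]
  refine Set.ncard_le_ncard ?_
  rintro _ ⟨z, hz, rfl⟩
  simpa [mem_commonNeighbors] using hz

lemma ncard_edgeSet_eq_card_edgeFinset [Fintype V] (G : SimpleGraph V) [Fintype G.edgeSet] :
    G.edgeSet.ncard = #G.edgeFinset :=
  Set.ncard_eq_toFinset_card' _

section Complement

variable [Fintype V] [DecidableEq V] (G : SimpleGraph V) [DecidableRel G.Adj]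

lemma sum_degrees_add_sum_degrees_compl :
    ∑ v, G.degree v + ∑ v, Gᶜ.degree v = Fintype.card V * (Fintype.card V - 1) := by
  calc ∑ v, G.degree v + ∑ v, Gᶜ.degree v = ∑ v, (G.degree v + Gᶜ.degree v) :=
        sum_add_distrib.symm
    _ = ∑ _v : V, (Fintype.card V - 1) := sum_congr rfl fun v _ => by
        have := G.degree_lt_card_verts v
        rw [degree_compl]
        omega
    _ = Fintype.card V * (Fintype.card V - 1) := by simp

lemma ncard_commonNeighbors_add_card_union_compl {x y : V} (h : G.Adj x y) :
    (G.commonNeighbors x y).ncard + #(Gᶜ.neighborFinset x ∪ Gᶜ.neighborFinset y) + 2 =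
      Fintype.card V := by
  set U := Gᶜ.neighborFinset x ∪ Gᶜ.neighborFinset y
  have hxU : x ∉ U := by simpa [U] using fun _ => h.symm
  have hyU : y ∉ U := by simpa [U] using fun _ => h
  have hcommon : (G.commonNeighbors x y).toFinset = univ \ insert x (insert y U) := by
    ext z
    simp only [Set.mem_toFinset, mem_commonNeighbors, mem_sdiff, mem_univ, true_and, mem_insert,
      U, Finset.mem_union, mem_neighborFinset, compl_adj]
    constructor
    · rintro ⟨hxz, hyz⟩
      simp [hxz, hyz, hxz.ne', hyz.ne']
    · intro hz
      tauto
  rw [Set.ncard_eq_toFinset_card', hcommon, card_sdiff_of_subset (subset_univ _), card_univ,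
    card_insert_of_notMem (by simp [hxU, h.ne]), card_insert_of_notMem hyU]
  have : #U + 1 < Fintype.card V := by
    simpa [card_insert_of_notMem, hxU, hyU, h.ne] using card_le_univ (insert x (insert y U))
  omega

variable {G} in
theorem not_containsBook_iff_nonadjUnionAtLeast_compl {p k : ℕ}
    (hV : Fintype.card V = p + k + 1) : ¬G.ContainsBook p ↔ Gᶜ.NonadjUnionAtLeast k := by
  constructor
  · intro hG x y hxy hn
    have hadj : G.Adj x y := by simpa [compl_adj, hxy] using hn
    have := G.ncard_commonNeighbors_add_card_union_compl hadj
    by_contra hlt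
    exact hG ⟨x, y, hadj, by omega⟩
  · rintro hH ⟨x, y, hadj, hp⟩
    have := hH hadj.ne (by simp [hadj])
    have := G.ncard_commonNeighbors_add_card_union_compl hadj
    omega

end Complement

namespace NonadjUnionAtLeast

variable [Fintype V] [DecidableEq V] {H : SimpleGraph V} [DecidableRel H.Adj] {k : ℕ}

lemma mono (hH : H.NonadjUnionAtLeast k) {j : ℕ} (hjk : j ≤ k) : H.NonadjUnionAtLeast j :=
  fun _ _ hxy hn => hjk.trans (hH hxy hn)

lemma le_degree_add_degree (hH : H.NonadjUnionAtLeast k) {x y : V} (hxy : x ≠ y)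
    (hn : ¬H.Adj x y) : k ≤ H.degree x + H.degree y := by
  rw [← card_neighborFinset_eq_degree, ← card_neighborFinset_eq_degree]
  exact (hH hxy hn).trans (card_union_le _ _)

theorem three_mul_card_sub_one_le_sum_degrees (hH : H.NonadjUnionAtLeast 5)
    (hV : 3 ≤ Fintype.card V) : 3 * (Fintype.card V - 1) ≤ ∑ v, H.degree v := by
  by_cases hcubic : ∀ v, 3 ≤ H.degree v
  · calc 3 * (Fintype.card V - 1) ≤ #(univ : Finset V) • 3 := by simp; omega
      _ ≤ ∑ v, H.degree v := card_nsmul_le_sum _ _ _ fun v _ => hcubic v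
  push Not at hcubic
  obtain ⟨w, hw⟩ := hcubic
  obtain ⟨u, -, hu⟩ := exists_min_image univ (fun v => H.degree v) ⟨w, mem_univ w⟩
  set d := H.degree u
  have hd : d ≤ 2 := by have := hu w (mem_univ w); omega
  set N := insert u (H.neighborFinset u)
  have hN : #N = d + 1 := by
    rw [card_insert_of_notMem (by simp), card_neighborFinset_eq_degree]
  have hlow : #N • d ≤ ∑ v ∈ N, H.degree v :=
    card_nsmul_le_sum _ _ _ fun v _ => hu v (mem_univ v)
  have hhigh : #Nᶜ • (5 - d) ≤ ∑ v ∈ Nᶜ, H.degree v := by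
    refine card_nsmul_le_sum _ _ _ fun v hv => ?_
    have hv' : v ≠ u ∧ ¬H.Adj u v := by simpa [N] using hv
    have := hH.le_degree_add_degree hv'.1.symm hv'.2
    omega
  rw [smul_eq_mul, hN] at hlow
  rw [smul_eq_mul, card_compl, hN] at hhigh
  rw [← sum_add_sum_compl N]
  interval_cases d <;> omega

end NonadjUnionAtLeast

lemma nonadjUnionAtLeast_top [Fintype V] [DecidableEq V] (k : ℕ) :
    (⊤ : SimpleGraph V).NonadjUnionAtLeast k :=
  fun _ _ hxy hn => absurd ((top_adj _ _).2 hxy) hn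

theorem two_mul_ncard_edgeSet_le_of_not_containsBook [Fintype V] {G : SimpleGraph V} {p : ℕ}
    (hV : Fintype.card V = p + 6) (hG : ¬G.ContainsBook p) :
    2 * G.edgeSet.ncard ≤ (p + 3) * (p + 5) := by
  classical
  have hH := (not_containsBook_iff_nonadjUnionAtLeast_compl (k := 5) hV).1 hG
  have hlower := hH.three_mul_card_sub_one_le_sum_degrees (by omega)
  have hsum := G.sum_degrees_add_sum_degrees_compl
  have hcount : (p + 6) * (p + 6 - 1) = (p + 3) * (p + 5) + 3 * (p + 5) := by
    rw [Nat.add_sub_assoc (by norm_num)]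
    ring
  rw [ncard_edgeSet_eq_card_edgeFinset, ← sum_degrees_eq_twice_card_edges]
  rw [hV] at hlower hsum
  omega

section Sum

variable {A : SimpleGraph V} {B : SimpleGraph W}

lemma neighborFinset_sum_inl (a : V) [Fintype (A.neighborSet a)]
    [Fintype ((A ⊕g B).neighborSet (.inl a))] :
    (A ⊕g B).neighborFinset (.inl a) = (A.neighborFinset a).map .inl := by
  ext (v | w) <;> simp

lemma neighborFinset_sum_inr (b : W) [Fintype (B.neighborSet b)]
    [Fintype ((A ⊕g B).neighborSet (.inr b))] :
    (A ⊕g B).neighborFinset (.inr b) = (B.neighborFinset b).map .inr := by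
  ext (v | w) <;> simp

lemma degree_sum_inl (a : V) [Fintype (A.neighborSet a)]
    [Fintype ((A ⊕g B).neighborSet (.inl a))] : (A ⊕g B).degree (.inl a) = A.degree a := by
  rw [← card_neighborFinset_eq_degree, neighborFinset_sum_inl, card_map,
    card_neighborFinset_eq_degree]

lemma degree_sum_inr (b : W) [Fintype (B.neighborSet b)]
    [Fintype ((A ⊕g B).neighborSet (.inr b))] : (A ⊕g B).degree (.inr b) = B.degree b := by
  rw [← card_neighborFinset_eq_degree, neighborFinset_sum_inr, card_map,
    card_neighborFinset_eq_degree]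

lemma IsRegularOfDegree.sum [LocallyFinite A] [LocallyFinite B] [LocallyFinite (A ⊕g B)]
    {d : ℕ} (hA : A.IsRegularOfDegree d) (hB : B.IsRegularOfDegree d) :
    (A ⊕g B).IsRegularOfDegree d
  | .inl a => (degree_sum_inl a).trans (hA a)
  | .inr b => (degree_sum_inr b).trans (hB b)

lemma card_neighborFinset_sum_inl_union_inr [DecidableEq V] [DecidableEq W] (a : V) (b : W)
    [Fintype (A.neighborSet a)] [Fintype (B.neighborSet b)]
    [Fintype ((A ⊕g B).neighborSet (.inl a))] [Fintype ((A ⊕g B).neighborSet (.inr b))] :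
    #((A ⊕g B).neighborFinset (.inl a) ∪ (A ⊕g B).neighborFinset (.inr b)) =
      A.degree a + B.degree b := by
  rw [neighborFinset_sum_inl, neighborFinset_sum_inr, card_union_of_disjoint, card_map,
    card_map, card_neighborFinset_eq_degree, card_neighborFinset_eq_degree]
  exact disjoint_map_inl_map_inr _ _

lemma sum_degrees_sum [Fintype V] [Fintype W] [DecidableRel A.Adj] [DecidableRel B.Adj]
    [DecidableRel (A ⊕g B).Adj] :
    ∑ v, (A ⊕g B).degree v = ∑ a, A.degree a + ∑ b, B.degree b := by
  simp only [Fintype.sum_sum_type, degree_sum_inl, degree_sum_inr]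

variable [Fintype V] [Fintype W] [DecidableEq V] [DecidableEq W]
  [DecidableRel A.Adj] [DecidableRel B.Adj] [DecidableRel (A ⊕g B).Adj]

theorem NonadjUnionAtLeast.sum {k : ℕ} (hA : A.NonadjUnionAtLeast k)
    (hB : B.NonadjUnionAtLeast k) (hAB : ∀ a b, k ≤ A.degree a + B.degree b) :
    (A ⊕g B).NonadjUnionAtLeast k := by
  rintro (a | b) (a' | b') hxy hn
  · rw [neighborFinset_sum_inl, neighborFinset_sum_inl, ← map_union, card_map]
    exact hA (by simpa using hxy) (by simpa using hn)
  · rw [card_neighborFinset_sum_inl_union_inr]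
    exact hAB a b'
  · rw [union_comm, card_neighborFinset_sum_inl_union_inr]
    exact hAB a' b
  · rw [neighborFinset_sum_inr, neighborFinset_sum_inr, ← map_union, card_map]
    exact hB (by simpa using hxy) (by simpa using hn)

end Sum

end SimpleGraph

lemma unionComplete_adj {m k : ℕ} {x y : Fin m × Fin k} :
    (unionComplete m k).Adj x y ↔ x ≠ y ∧ x.1 = y.1 := by
  simp [unionComplete, eq_comm]

lemma unionComplete_isRegularOfDegree (m k : ℕ) [LocallyFinite (unionComplete m k)] :
    (unionComplete m k).IsRegularOfDegree (k - 1) := fun x => by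
  have hN : (unionComplete m k).neighborFinset x = (univ.erase x.2).map (.sectR x.1 _) := by
    ext y
    simp only [mem_neighborFinset, unionComplete_adj, mem_map, mem_erase, mem_univ, and_true,
      Function.Embedding.sectR_apply]
    constructor
    · rintro ⟨hxy, h1⟩
      exact ⟨y.2, fun h2 => hxy (Prod.ext h1 h2.symm), Prod.ext h1 rfl⟩
    · rintro ⟨j, hj, rfl⟩
      exact ⟨fun h => hj (congrArg Prod.snd h).symm, rfl⟩
  rw [← card_neighborFinset_eq_degree, hN, card_map, card_erase_of_mem (mem_univ _), card_univ,
    Fintype.card_fin]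

lemma unionComplete_nonadjUnionAtLeast (m k : ℕ) [DecidableRel (unionComplete m k).Adj] :
    (unionComplete m k).NonadjUnionAtLeast (2 * (k - 1)) := by
  intro x y hxy hn
  have hblock : x.1 ≠ y.1 := fun h => hn (unionComplete_adj.2 ⟨hxy, h⟩)
  have hdisj : Disjoint ((unionComplete m k).neighborFinset x)
      ((unionComplete m k).neighborFinset y) := by
    refine disjoint_left.2 fun z hx hy => hblock ?_
    rw [mem_neighborFinset, unionComplete_adj] at hx hy
    exact hx.2.trans hy.2.symm
  rw [card_union_of_disjoint hdisj, card_neighborFinset_eq_degree, card_neighborFinset_eq_degree,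
    unionComplete_isRegularOfDegree m k x, unionComplete_isRegularOfDegree m k y, two_mul]

/-- The Kneser graph `K(5, 2)`. -/
def petersenGraph : SimpleGraph {s : Finset (Fin 5) // #s = 2} :=
  SimpleGraph.fromRel fun s t => Disjoint s.1 t.1

instance : DecidableRel petersenGraph.Adj := fun s t =>
  inferInstanceAs (Decidable (s ≠ t ∧ (Disjoint s.1 t.1 ∨ Disjoint t.1 s.1)))

lemma petersenGraph_isRegularOfDegree : petersenGraph.IsRegularOfDegree 3 := by
  unfold SimpleGraph.IsRegularOfDegree
  decide

lemma petersenGraph_nonadjUnionAtLeast : petersenGraph.NonadjUnionAtLeast 5 := by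
  unfold SimpleGraph.NonadjUnionAtLeast
  decide

theorem exists_not_containsBook_of_sum_degrees {V : Type*} [Fintype V] [DecidableEq V]
    {H : SimpleGraph V} [DecidableRel H.Adj] {p : ℕ} (hV : Fintype.card V = p + 6)
    (hH : H.NonadjUnionAtLeast 5) (hdeg : ∑ v, H.degree v = 3 * (p + 5)) :
    ∃ G : SimpleGraph (Fin (p + 6)),
      ¬G.ContainsBook p ∧ 2 * G.edgeSet.ncard = (p + 3) * (p + 5) := by
  classical
  let e := Fintype.equivFinOfCardEq hV
  let φ := Iso.map e Hᶜ
  refine ⟨Hᶜ.map e, fun hbook => ?_, ?_⟩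
  · refine (not_containsBook_iff_nonadjUnionAtLeast_compl (k := 5) hV).2 ?_
      (hbook.of_embedding φ.symm.toEmbedding)
    convert hH
    exact compl_compl H
  · have hsum := H.sum_degrees_add_sum_degrees_compl
    have hcount : (p + 6) * (p + 6 - 1) = 3 * (p + 5) + (p + 3) * (p + 5) := by
      rw [Nat.add_sub_assoc (by norm_num)]
      ring
    rw [ncard_edgeSet_eq_card_edgeFinset, ← φ.card_edgeFinset_eq,
      ← sum_degrees_eq_twice_card_edges]
    rw [hV, hdeg] at hsum
    omega

theorem exists_not_containsBook_of_isRegularOfDegree_three {W : Type*} [Fintype W]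
    [DecidableEq W] {B : SimpleGraph W} [DecidableRel B.Adj] {p : ℕ}
    (hW : Fintype.card W = p + 3) (hB3 : B.IsRegularOfDegree 3) (hB : B.NonadjUnionAtLeast 5) :
    ∃ G : SimpleGraph (Fin (p + 6)),
      ¬G.ContainsBook p ∧ 2 * G.edgeSet.ncard = (p + 3) * (p + 5) := by
  classical
  have hK3 : (⊤ : SimpleGraph (Fin 3)).IsRegularOfDegree 2 := IsRegularOfDegree.top
  refine exists_not_containsBook_of_sum_degrees (H := (⊤ : SimpleGraph (Fin 3)) ⊕g B)
    (by simp [hW]; omega) ((nonadjUnionAtLeast_top 5).sum hB fun a b => by rw [hK3 a, hB3 b]) ?_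
  rw [sum_degrees_sum]
  simp [hK3.degree_eq, hB3.degree_eq, hW]
  ring

theorem exists_not_containsBook {p : ℕ} (hp : 5 ≤ p) (hodd : Odd p) :
    ∃ G : SimpleGraph (Fin (p + 6)),
      ¬G.ContainsBook p ∧ 2 * G.edgeSet.ncard = (p + 3) * (p + 5) := by
  classical
  have hK4 (m : ℕ) : (unionComplete m 4).NonadjUnionAtLeast 5 :=
    (unionComplete_nonadjUnionAtLeast m 4).mono (by norm_num)
  have hmod : p % 4 = 1 ∨ p % 4 = 3 := by
    obtain ⟨k, rfl⟩ := hodd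
    omega
  rcases hmod with hmod | hmod
  · exact exists_not_containsBook_of_isRegularOfDegree_three (B := unionComplete ((p + 3) / 4) 4)
      (by simp; omega) (unionComplete_isRegularOfDegree _ 4) (hK4 _)
  · exact exists_not_containsBook_of_isRegularOfDegree_three
      (B := petersenGraph ⊕g unionComplete ((p - 7) / 4) 4)
      (by simp [Nat.choose_two_right]; omega)
      -- `convert` identifies the `LocallyFinite` instance of `⊕g` with the `Fintype` one
      (by convert petersenGraph_isRegularOfDegree.sum (unionComplete_isRegularOfDegree _ 4))
      (petersenGraph_nonadjUnionAtLeast.sum (hK4 _) fun a b => by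
        rw [petersenGraph_isRegularOfDegree a, unionComplete_isRegularOfDegree _ 4 b]; norm_num)

theorem stmt19 (p : ℕ) (hp : 5 ≤ p) (hodd : Odd p) :
    bookTuranNumber (p + 6) p = (p + 3) * (p + 5) / 2 := by
  refine IsGreatest.csSup_eq ⟨?_, ?_⟩
  · obtain ⟨G, hG, hE⟩ := exists_not_containsBook hp hodd
    exact ⟨G, hG, by rw [← hE, Nat.mul_div_cancel_left _ two_pos]⟩
  · rintro _ ⟨G, hG, rfl⟩
    have := two_mul_ncard_edgeSet_le_of_not_containsBook (Fintype.card_fin _) hG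
    exact (Nat.le_div_iff_mul_le two_pos).2 (by linarith)
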